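/- arXiv:1905.01442 — 2 statements merged into one kernel-verified Lean document; each statement's English description precedes it below -/
import Mathlib

section
/- For K(x,t) = x/(2√π t^{3/2}) e^{−x²/(4t)} (t > 0) and any continuous P on [0,T], lim_{x → 0⁺} ∫₀ᵗ K(x, t−τ) P(τ) dτ = P(t) for each t ∈ (0,T]. -/
open Set intervalIntegral Real Filter

/-- The heat flux kernel `K(x,t) = x/(2√π t^{3/2}) e^{−x²/(4t)}` for `t > 0`, `K(x,0) = 0`. -/
noncomputable def K (x t : ℝ) : ℝ :=
  if 0 < t then x / (2 * Real.sqrt π * t ^ ((3:ℝ)/2)) * Real.exp (-x^2 / (4*t)) else 0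

/-!
`K x` is, up to the change of variables `u = x / (2√s)`, the Gaussian density: its integral over
`(0, b]` is `erfc (x / (2√b))`, which tends to `1` as `x → 0⁺`, while `K x → 0` uniformly on
`[δ, ∞)` for every `δ > 0`. So `K x` is a peak function at `s = 0`, and after the substitution
`s = t - τ` the theorem is the peak-function limit `∫₀ᵗ K x s P (t - s) ds → P t`.
-/

open MeasureTheory Topology

lemma measurable_K (x : ℝ) : Measurable (K x) :=
  Measurable.ite measurableSet_Ioi (by fun_prop) measurable_const

lemma K_nonneg {x : ℝ} (hx : 0 ≤ x) (s : ℝ) : 0 ≤ K x s := by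
  unfold K
  split_ifs <;> positivity

lemma K_le_of_le {x δ s : ℝ} (hx : 0 ≤ x) (hδ : 0 < δ) (hδs : δ ≤ s) :
    K x s ≤ x / (2 * √π * δ ^ ((3:ℝ)/2)) := by
  have hs : 0 < s := hδ.trans_le hδs
  rw [K, if_pos hs]
  calc x / (2 * √π * s ^ ((3:ℝ)/2)) * exp (-x^2 / (4*s))
      ≤ x / (2 * √π * s ^ ((3:ℝ)/2)) := by
        refine mul_le_of_le_one_right (by positivity) (exp_le_one_iff.2 ?_)
        rw [neg_div]
        exact neg_nonpos.2 (by positivity)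
    _ ≤ x / (2 * √π * δ ^ ((3:ℝ)/2)) := by gcongr

lemma tendstoUniformlyOn_K_Ici {δ : ℝ} (hδ : 0 < δ) :
    TendstoUniformlyOn K 0 (𝓝[>] 0) (Ici δ) := by
  have hlim : Tendsto (fun x : ℝ => x / (2 * √π * δ ^ ((3:ℝ)/2))) (𝓝[>] 0) (𝓝 0) := by
    simpa using ((continuous_id.div_const _).tendsto (0:ℝ)).mono_left nhdsWithin_le_nhds
  rw [Metric.tendstoUniformlyOn_iff]
  intro ε hε
  filter_upwards [hlim (Iio_mem_nhds hε), self_mem_nhdsWithin] with x hxε hx s hs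
  rw [Pi.zero_apply, dist_zero_left, norm_of_nonneg (K_nonneg hx.out.le s)]
  exact (K_le_of_le hx.out.le hδ hs).trans_lt hxε

noncomputable def erf (y : ℝ) : ℝ := 2 / √π * ∫ u in (0:ℝ)..y, exp (-u^2)

lemma hasDerivAt_erf (y : ℝ) : HasDerivAt erf (2 / √π * exp (-y^2)) y :=
  ((continuous_exp.comp (continuous_pow 2).neg).integral_hasStrictDerivAt 0 y).hasDerivAt.const_mul
    _

lemma continuous_erf : Continuous erf :=
  continuous_iff_continuousAt.2 fun y => (hasDerivAt_erf y).continuousAt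

lemma erf_zero : erf 0 = 0 := by simp [erf]

lemma tendsto_erf_atTop : Tendsto erf atTop (𝓝 1) := by
  have hint : IntegrableOn (fun u : ℝ => exp (-u^2)) (Ioi 0) := by
    simpa using (integrable_exp_neg_mul_sq one_pos).integrableOn
  have h := (intervalIntegral_tendsto_integral_Ioi 0 hint tendsto_id).const_mul (2 / √π)
  have hπ : √π ≠ 0 := (sqrt_pos.2 pi_pos).ne'
  rwa [show ∫ u in Ioi (0:ℝ), exp (-u^2) = √π / 2 by simpa using integral_gaussian_Ioi 1,
    div_mul_div_cancel₀ hπ, div_self two_ne_zero] at h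

lemma rpow_three_halves {s : ℝ} (hs : 0 ≤ s) : s ^ ((3:ℝ)/2) = s * √s := by
  rw [show (3:ℝ)/2 = 1 + 1/2 by norm_num, rpow_add' hs (by norm_num), rpow_one, sqrt_eq_rpow]

lemma hasDerivAt_neg_erf_div_two_sqrt (x : ℝ) {s : ℝ} (hs : 0 < s) :
    HasDerivAt (fun s => -erf (x / (2 * √s))) (K x s) s := by
  have hr : 0 < √s := sqrt_pos.2 hs
  have hinner :=
    (hasDerivAt_const s x).fun_div ((hasDerivAt_sqrt hs.ne').const_mul 2) (by positivity)
  refine (((hasDerivAt_erf _).comp s hinner).neg :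
    HasDerivAt (fun s => -erf (x / (2 * √s))) _ s).congr_deriv ?_
  rw [K, if_pos hs, rpow_three_halves hs.le, div_pow, mul_pow, sq_sqrt hs.le]
  field_simp
  ring_nf

lemma tendsto_neg_erf_div_two_sqrt_nhdsGT_zero {x : ℝ} (hx : 0 < x) :
    Tendsto (fun s => -erf (x / (2 * √s))) (𝓝[>] 0) (𝓝 (-1)) := by
  have hsqrt : Tendsto (fun s => 2 * √s) (𝓝[>] 0) (𝓝[>] 0) := by
    refine tendsto_nhdsWithin_of_tendsto_nhds_of_eventually_within _ ?_ ?_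
    · simpa using ((continuous_sqrt.const_mul 2).tendsto 0).mono_left nhdsWithin_le_nhds
    · filter_upwards [self_mem_nhdsWithin] with s hs using mul_pos two_pos (sqrt_pos.2 hs)
  exact (tendsto_erf_atTop.comp (hsqrt.inv_tendsto_nhdsGT_zero.const_mul_atTop hx)).neg

lemma setIntegral_Ioc_K {x b : ℝ} (hx : 0 < x) (hb : 0 < b) :
    ∫ s in Ioc 0 b, K x s = 1 - erf (x / (2 * √b)) := by
  -- `x / (2 * √0) = x / 0 = 0` is a junk value, so the primitive is patched to its limit at `0`.
  set F : ℝ → ℝ := Function.update (fun s => -erf (x / (2 * √s))) 0 (-1)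
  have hderiv : ∀ s, 0 < s → HasDerivAt F (K x s) s := fun s hs =>
    (hasDerivAt_neg_erf_div_two_sqrt x hs).congr_of_eventuallyEq
      ((eventually_ne_nhds hs.ne').mono fun u hu => Function.update_of_ne hu _ _)
  have hcont : ContinuousOn F (Icc 0 b) := by
    intro s hs
    rcases hs.1.eq_or_lt with rfl | hs0
    · refine continuousWithinAt_update_same.2
        ((tendsto_neg_erf_div_two_sqrt_nhdsGT_zero hx).mono_left ?_)
      exact nhdsWithin_mono _ fun u hu => hu.1.1.lt_of_ne' hu.2
    · exact (hderiv s hs0).continuousAt.continuousWithinAt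
  have hint : IntegrableOn (K x) (Ioc 0 b) :=
    integrableOn_deriv_of_nonneg hcont (fun s hs => hderiv s hs.1) fun s _ => K_nonneg hx.le s
  rw [← integral_of_le hb.le, integral_eq_sub_of_hasDerivAt_of_le hb.le hcont
    (fun s hs => hderiv s hs.1) ((intervalIntegrable_iff_integrableOn_Ioc_of_le hb.le).2 hint)]
  simp only [F, Function.update_of_ne hb.ne', Function.update_self, sub_neg_eq_add]
  ring

lemma tendsto_setIntegral_Ioc_K {b : ℝ} (hb : 0 < b) :
    Tendsto (fun x => ∫ s in Ioc 0 b, K x s) (𝓝[>] 0) (𝓝 1) := by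
  have h : Tendsto (fun x => 1 - erf (x / (2 * √b))) (𝓝[>] 0) (𝓝 1) := by
    have := (continuous_erf.comp (continuous_id.div_const (2 * √b))).tendsto 0
    simpa [erf_zero] using (tendsto_const_nhds.sub this).mono_left nhdsWithin_le_nhds
  exact h.congr' (eventually_nhdsWithin_of_forall fun x hx => (setIntegral_Ioc_K hx hb).symm)

theorem tendsto_setIntegral_Ioc_K_mul {a b : ℝ} {g : ℝ → ℝ} (hb : 0 < b)
    (hg : IntegrableOn g (Ioc 0 b))
    (hga : Tendsto g (𝓝[Ioc 0 b] 0) (𝓝 a)) :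
    Tendsto (fun x => ∫ s in Ioc 0 b, K x s * g s) (𝓝[>] 0) (𝓝 a) := by
  refine tendsto_setIntegral_peak_smul_of_integrableOn_of_tendsto measurableSet_Ioc
    measurableSet_Ioc subset_rfl self_mem_nhdsWithin measure_Ioc_lt_top.ne ?_ ?_
    (tendsto_setIntegral_Ioc_K hb)
    (Eventually.of_forall fun x => (measurable_K x).aestronglyMeasurable)
    hg hga
  · filter_upwards [self_mem_nhdsWithin] with x hx s _ using K_nonneg hx.out.le s
  · intro u hu h0u
    obtain ⟨δ, hδ, hball⟩ := Metric.isOpen_iff.1 hu 0 h0u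
    refine (tendstoUniformlyOn_K_Ici hδ).mono fun s hs =>
      mem_Ici.2 <| not_lt.1 fun hsδ => hs.2 (hball ?_)
    rwa [Metric.mem_ball, dist_zero_right, norm_of_nonneg hs.1.1.le]

theorem K_delta_approx_general (T : ℝ) (P : ℝ → ℝ)
    (hP : ContinuousOn P (Set.Icc 0 T)) :
    ∀ t ∈ Set.Ioc (0:ℝ) T,
      Tendsto (fun x => ∫ τ in (0:ℝ)..t, K x (t - τ) * P τ)
        (nhdsWithin 0 (Set.Ioi 0)) (nhds (P t)) := by
  rintro t ⟨ht, htT⟩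
  have hreflect (x : ℝ) :
      ∫ τ in (0:ℝ)..t, K x (t - τ) * P τ = ∫ s in Ioc 0 t, K x s * P (t - s) := by
    have h := integral_comp_sub_left (a := 0) (b := t) (fun s => K x s * P (t - s)) t
    simp only [sub_sub_cancel, sub_self, sub_zero] at h
    rw [h, integral_of_le ht.le]
  have hPt : ContinuousOn (fun s => P (t - s)) (Icc 0 t) :=
    hP.comp (continuous_const.sub continuous_id).continuousOn
      fun s hs => ⟨by linarith [hs.2], by linarith [hs.1]⟩
  have hPt0 : Tendsto (fun s => P (t - s)) (𝓝[Ioc 0 t] 0) (𝓝 (P t)) := by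
    simpa using
      (hPt 0 ⟨le_rfl, ht.le⟩).tendsto.mono_left (nhdsWithin_mono _ Ioc_subset_Icc_self)
  simpa only [hreflect] using
    tendsto_setIntegral_Ioc_K_mul ht (hPt.integrableOn_Icc.mono_set Ioc_subset_Icc_self) hPt0

theorem K_delta_approx (T : ℝ) (hT : 0 < T) (P : ℝ → ℝ)
    (hP : ContinuousOn P (Set.Icc 0 T)) :
    ∀ t ∈ Set.Ioc (0:ℝ) T,
      Tendsto (fun x => ∫ τ in (0:ℝ)..t, K x (t - τ) * P τ)
        (nhdsWithin 0 (Set.Ioi 0)) (nhds (P t)) :=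
  K_delta_approx_general T P hP
end

section
/- For K(x,t) = x/(2√π t^{3/2}) e^{−x²/(4t)}, the semigroup (reproducing) property ∫_{t'}^{t} K(x'−x, t−τ) K(x−z, τ−t') dτ = K(x'−z, t−t') holds for all x' > x > z and t > t'. -/
/-!
After a shift in time the claim reads `∫₀ˢ K(a, s - τ) K(b, τ) dτ = K(a + b, s)` for
`a, b, s > 0`. The substitution `τ = s σ² / (1 + σ²)` turns the integrand into
`e^{-(a+b)²/4s} / (2π s²) · (b·a + a·b/σ²) · e^{-(aσ - b/σ)²/4s}` on `σ > 0`, because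
`a²σ² + b²/σ² = (aσ - b/σ)² + 2ab`. The Cauchy–Schlömilch substitution `y = aσ - b/σ` gives
`∫_{σ>0} (a + b/σ²) f(aσ - b/σ) dσ = ∫_ℝ f`, and for even `f` the involution `σ ↦ b/(aσ)`
exchanges the two halves `a f(aσ - b/σ)` and `(b/σ²) f(aσ - b/σ)`, so each integrates to
`½ ∫_ℝ f`. With `f` the Gaussian `e^{-y²/4s}` of integral `2√(πs)` this is `K(a + b, s)`.
-/

open Set intervalIntegral Real

open MeasureTheory

section CauchySchlomilch

variable {E : Type*} [NormedAddCommGroup E] [NormedSpace ℝ E] {a b c : ℝ}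

theorem integral_Ioi_div_sq_smul_comp_div (hc : 0 < c) (h : ℝ → E) :
    ∫ σ in Ioi 0, (c / σ ^ 2) • h (c / σ) = ∫ σ in Ioi 0, h σ := by
  have hderiv : ∀ σ ∈ Ioi (0 : ℝ), HasDerivWithinAt (fun σ => c / σ) (-(c / σ ^ 2)) (Ioi 0) σ :=
    fun σ hσ => by
      simpa [div_eq_mul_inv] using ((hasDerivAt_inv (ne_of_gt hσ)).const_mul c).hasDerivWithinAt
  have hinj : InjOn (fun σ => c / σ) (Ioi 0) := fun p _ q _ h => by
    simpa [div_eq_mul_inv, hc.ne'] using h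
  have himage : (fun σ => c / σ) '' Ioi 0 = Ioi 0 := by
    refine Subset.antisymm (image_subset_iff.2 fun σ hσ => div_pos hc hσ) fun σ hσ => ?_
    exact ⟨c / σ, div_pos hc hσ, div_div_cancel₀ hc.ne'⟩
  have := integral_image_eq_integral_abs_deriv_smul measurableSet_Ioi hderiv hinj h
  rw [himage] at this
  rw [this]
  refine setIntegral_congr_fun measurableSet_Ioi fun σ hσ => ?_
  rw [abs_neg, abs_of_pos (div_pos hc (pow_pos hσ 2))]

theorem hasDerivAt_mul_sub_div {σ : ℝ} (hσ : σ ≠ 0) :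
    HasDerivAt (fun σ => a * σ - b / σ) (a + b / σ ^ 2) σ := by
  have h := ((hasDerivAt_id σ).const_mul a).fun_sub ((hasDerivAt_inv hσ).const_mul b)
  simpa only [id, ← div_eq_mul_inv, mul_one, mul_neg, sub_neg_eq_add] using h

theorem strictMonoOn_mul_sub_div (ha : 0 < a) (hb : 0 ≤ b) :
    StrictMonoOn (fun σ => a * σ - b / σ) (Ioi 0) := fun p hp q _ hpq => by
  have : b / q ≤ b / p := div_le_div_of_nonneg_left hb hp hpq.le
  dsimp only
  nlinarith

theorem image_mul_sub_div_Ioi (ha : 0 < a) (hb : 0 < b) :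
    (fun σ => a * σ - b / σ) '' Ioi 0 = univ := by
  refine eq_univ_of_forall fun y => ?_
  set r := √(y ^ 2 + 4 * (a * b))
  have hr : r ^ 2 = y ^ 2 + 4 * (a * b) := sq_sqrt (by positivity)
  have hyr : 0 < y + r := by
    have : |y| < r := by
      rw [← sqrt_sq_eq_abs]
      exact sqrt_lt_sqrt (sq_nonneg y) (by nlinarith)
    linarith [neg_abs_le y]
  refine ⟨(y + r) / (2 * a), mem_Ioi.2 (by positivity), ?_⟩
  field_simp
  linear_combination hr

theorem integral_Ioi_smul_comp_mul_sub_div (ha : 0 < a) (hb : 0 < b) (f : ℝ → E) :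
    ∫ σ in Ioi 0, (a + b / σ ^ 2) • f (a * σ - b / σ) = ∫ y, f y := by
  have h := integral_image_eq_integral_abs_deriv_smul measurableSet_Ioi
    (fun σ hσ => (hasDerivAt_mul_sub_div (ne_of_gt hσ)).hasDerivWithinAt)
    (strictMonoOn_mul_sub_div ha hb.le).injOn f
  rw [image_mul_sub_div_Ioi ha hb, Measure.restrict_univ] at h
  rw [h]
  refine setIntegral_congr_fun measurableSet_Ioi fun σ (hσ : 0 < σ) => ?_
  rw [abs_of_pos (by positivity)]

theorem integrableOn_Ioi_smul_comp_mul_sub_div (ha : 0 < a) (hb : 0 < b) {f : ℝ → E}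
    (hf : Integrable f) :
    IntegrableOn (fun σ => (a + b / σ ^ 2) • f (a * σ - b / σ)) (Ioi 0) := by
  have h := integrableOn_image_iff_integrableOn_abs_deriv_smul measurableSet_Ioi
    (fun σ hσ => (hasDerivAt_mul_sub_div (ne_of_gt hσ)).hasDerivWithinAt)
    (strictMonoOn_mul_sub_div ha hb.le).injOn f
  rw [image_mul_sub_div_Ioi ha hb, integrableOn_univ] at h
  refine (h.1 hf).congr_fun (fun σ (hσ : 0 < σ) => ?_) measurableSet_Ioi
  dsimp only
  rw [abs_of_pos (by positivity)]

theorem integrableOn_Ioi_smul_comp_mul_sub_div_of_abs_le (ha : 0 < a) (hb : 0 < b) {f : ℝ → E}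
    (hf : Integrable f) {w : ℝ → ℝ} (hw : ContinuousOn w (Ioi 0))
    (hw_le : ∀ σ ∈ Ioi (0 : ℝ), |w σ| ≤ a + b / σ ^ 2) :
    IntegrableOn (fun σ => w σ • f (a * σ - b / σ)) (Ioi 0) := by
  have hpos : ∀ σ ∈ Ioi (0 : ℝ), 0 < a + b / σ ^ 2 := fun σ (hσ : 0 < σ) => by positivity
  have hratio : ContinuousOn (fun σ => w σ / (a + b / σ ^ 2)) (Ioi 0) :=
    hw.div (continuousOn_const.add (continuousOn_const.div (continuousOn_id.pow 2)
      fun σ (hσ : 0 < σ) => by positivity)) fun σ hσ => (hpos σ hσ).ne'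
  have h := (integrableOn_Ioi_smul_comp_mul_sub_div ha hb hf).bdd_smul 1
    (hratio.aestronglyMeasurable measurableSet_Ioi) ?_
  · refine IntegrableOn.congr_fun h (fun σ hσ => ?_) measurableSet_Ioi
    simp only [Pi.smul_apply', smul_smul, div_mul_cancel₀ _ (hpos σ hσ).ne']
  · refine (ae_restrict_iff' measurableSet_Ioi).2 (ae_of_all _ fun σ hσ => ?_)
    rw [norm_div, Real.norm_eq_abs, Real.norm_eq_abs, abs_of_pos (hpos σ hσ)]
    exact div_le_one_of_le₀ (hw_le σ hσ) (hpos σ hσ).le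

theorem integral_Ioi_smul_comp_mul_sub_div_eq_swap (ha : 0 < a) (hb : 0 < b) (f : ℝ → E) :
    ∫ σ in Ioi 0, a • f (a * σ - b / σ) = ∫ σ in Ioi 0, (b / σ ^ 2) • f (b / σ - a * σ) := by
  rw [← integral_Ioi_div_sq_smul_comp_div (div_pos hb ha)]
  refine setIntegral_congr_fun measurableSet_Ioi fun σ (hσ : 0 < σ) => ?_
  have h₁ : a * (b / a / σ) = b / σ := by field_simp
  have h₂ : b / (b / a / σ) = a * σ := by field_simp
  rw [h₁, h₂, smul_smul]
  congr 1
  field_simp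

theorem integral_Ioi_smul_comp_mul_sub_div_of_even (ha : 0 < a) (hb : 0 < b) {f : ℝ → E}
    (hf : Integrable f) (hf_even : f.Even) (p q : ℝ) :
    ∫ σ in Ioi 0, (p * a + q * (b / σ ^ 2)) • f (a * σ - b / σ) = ((p + q) / 2) • ∫ y, f y := by
  have hA : IntegrableOn (fun σ => a • f (a * σ - b / σ)) (Ioi 0) :=
    integrableOn_Ioi_smul_comp_mul_sub_div_of_abs_le ha hb hf continuousOn_const
      fun σ (hσ : 0 < σ) => by rw [abs_of_pos ha]; simp only [le_add_iff_nonneg_right]; positivity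
  have hB : IntegrableOn (fun σ => (b / σ ^ 2) • f (a * σ - b / σ)) (Ioi 0) :=
    integrableOn_Ioi_smul_comp_mul_sub_div_of_abs_le ha hb hf
      (continuousOn_const.div (continuousOn_id.pow 2) fun σ (hσ : 0 < σ) => by positivity)
      fun σ (hσ : 0 < σ) => by
        rw [abs_of_pos (by positivity)]; simp only [le_add_iff_nonneg_left]; exact ha.le
  have hswap : ∫ σ in Ioi 0, a • f (a * σ - b / σ) =
      ∫ σ in Ioi 0, (b / σ ^ 2) • f (a * σ - b / σ) := by
    rw [integral_Ioi_smul_comp_mul_sub_div_eq_swap ha hb]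
    simp only [← neg_sub (a * _), hf_even _]
  have hsum : (∫ σ in Ioi 0, a • f (a * σ - b / σ)) +
      ∫ σ in Ioi 0, (b / σ ^ 2) • f (a * σ - b / σ) = ∫ y, f y := by
    rw [← integral_add hA hB, ← integral_Ioi_smul_comp_mul_sub_div ha hb f]
    simp only [add_smul]
  calc ∫ σ in Ioi 0, (p * a + q * (b / σ ^ 2)) • f (a * σ - b / σ)
      = p • (∫ σ in Ioi 0, a • f (a * σ - b / σ)) +
          q • ∫ σ in Ioi 0, (b / σ ^ 2) • f (a * σ - b / σ) := by
        rw [← MeasureTheory.integral_smul, ← MeasureTheory.integral_smul,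
          ← MeasureTheory.integral_add]
        · simp only [add_smul, mul_smul]
        · exact hA.smul p
        · exact hB.smul q
    _ = ((p + q) / 2) • ∫ y, f y := by
        rw [← hsum, ← hswap]
        module

end CauchySchlomilch

theorem integral_exp_neg_sq_div (c : ℝ) : ∫ y : ℝ, exp (-y ^ 2 / c) = √(π * c) := by
  simpa [neg_div, div_eq_inv_mul, mul_comm π] using integral_gaussian c⁻¹

theorem integrable_exp_neg_sq_div {c : ℝ} (hc : 0 < c) :
    Integrable fun y : ℝ => exp (-y ^ 2 / c) := by
  simpa [neg_div, div_eq_inv_mul] using integrable_exp_neg_mul_sq (inv_pos.2 hc)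

section HeatKernel

variable {a b s t u σ : ℝ}

theorem K_of_pos (x : ℝ) (ht : 0 < t) :
    K x t = x / (2 * √π * t ^ ((3:ℝ)/2)) * exp (-x ^ 2 / (4 * t)) :=
  if_pos ht

theorem K_mul_K (ht : 0 < t) (hu : 0 < u) :
    K a t * K b u =
      a * b / (4 * π * (t * u) ^ ((3:ℝ)/2)) * exp (-(a ^ 2 / (4 * t) + b ^ 2 / (4 * u))) := by
  have hπ : √π ^ 2 = π := sq_sqrt pi_pos.le
  rw [K_of_pos a ht, K_of_pos b hu, mul_rpow ht.le hu.le, neg_add, exp_add, neg_div, neg_div]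
  have : 0 < √π := sqrt_pos.2 pi_pos
  have : 0 < t ^ ((3:ℝ)/2) := by positivity
  have : 0 < u ^ ((3:ℝ)/2) := by positivity
  field_simp
  rw [hπ]
  ring

theorem hasDerivAt_mul_sq_div_one_add_sq (s σ : ℝ) :
    HasDerivAt (fun σ => s * σ ^ 2 / (1 + σ ^ 2)) (2 * s * σ / (1 + σ ^ 2) ^ 2) σ := by
  refine (((hasDerivAt_pow 2 σ).const_mul s).fun_div ((hasDerivAt_pow 2 σ).const_add 1)
    (by positivity)).congr_deriv ?_
  field_simp
  ring

theorem strictMonoOn_mul_sq_div_one_add_sq (hs : 0 < s) :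
    StrictMonoOn (fun σ => s * σ ^ 2 / (1 + σ ^ 2)) (Ioi 0) := fun p (hp : 0 < p) q _ hpq => by
  dsimp only
  rw [div_lt_div_iff₀ (by positivity) (by positivity)]
  nlinarith [mul_lt_mul_of_pos_left (mul_self_lt_mul_self hp.le hpq) hs]

theorem image_mul_sq_div_one_add_sq_Ioi (hs : 0 < s) :
    (fun σ => s * σ ^ 2 / (1 + σ ^ 2)) '' Ioi 0 = Ioo 0 s := by
  refine Subset.antisymm (image_subset_iff.2 fun σ (hσ : 0 < σ) => ?_) fun τ ⟨hτ, hτs⟩ => ?_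
  · refine ⟨by positivity, ?_⟩
    rw [div_lt_iff₀ (by positivity)]
    linarith
  · have hq : 0 < τ / (s - τ) := div_pos hτ (sub_pos.2 hτs)
    refine ⟨√(τ / (s - τ)), sqrt_pos.2 hq, ?_⟩
    have : s - τ ≠ 0 := (sub_pos.2 hτs).ne'
    dsimp only
    rw [sq_sqrt hq.le]
    field_simp
    ring

theorem deriv_mul_K_mul_K_along_sq_div_one_add_sq (hs : 0 < s) (hσ : 0 < σ) :
    2 * s * σ / (1 + σ ^ 2) ^ 2 *
        (K a (s - s * σ ^ 2 / (1 + σ ^ 2)) * K b (s * σ ^ 2 / (1 + σ ^ 2))) =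
      exp (-(a + b) ^ 2 / (4 * s)) / (2 * π * s ^ 2) *
        ((b * a + a * (b / σ ^ 2)) * exp (-(a * σ - b / σ) ^ 2 / (4 * s))) := by
  have h1 : s - s * σ ^ 2 / (1 + σ ^ 2) = s / (1 + σ ^ 2) := by field_simp; ring
  have hprod : (s / (1 + σ ^ 2) * (s * σ ^ 2 / (1 + σ ^ 2))) ^ ((3:ℝ)/2) =
      (s * σ / (1 + σ ^ 2)) ^ 3 := by
    rw [show s / (1 + σ ^ 2) * (s * σ ^ 2 / (1 + σ ^ 2)) = (s * σ / (1 + σ ^ 2)) ^ (2:ℝ) by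
      rw [rpow_two]; ring, ← rpow_mul (by positivity)]
    norm_num
  have hexp : -(a ^ 2 / (4 * (s / (1 + σ ^ 2))) + b ^ 2 / (4 * (s * σ ^ 2 / (1 + σ ^ 2)))) =
      -(a + b) ^ 2 / (4 * s) + -(a * σ - b / σ) ^ 2 / (4 * s) := by
    field_simp
    ring
  rw [h1, K_mul_K (by positivity) (by positivity), hprod, hexp, exp_add]
  field_simp
  ring

theorem integral_Ioo_K_mul_K (ha : 0 < a) (hb : 0 < b) (hs : 0 < s) :
    ∫ τ in Ioo 0 s, K a (s - τ) * K b τ = K (a + b) s := by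
  have hgauss_even : (fun y : ℝ => exp (-y ^ 2 / (4 * s))).Even := fun y => by simp only [neg_sq]
  rw [← image_mul_sq_div_one_add_sq_Ioi hs, integral_image_eq_integral_abs_deriv_smul
    measurableSet_Ioi (fun σ _ => (hasDerivAt_mul_sq_div_one_add_sq s σ).hasDerivWithinAt)
    (strictMonoOn_mul_sq_div_one_add_sq hs).injOn]
  calc _ = ∫ σ in Ioi 0, (exp (-(a + b) ^ 2 / (4 * s)) / (2 * π * s ^ 2)) •
        ((b * a + a * (b / σ ^ 2)) • exp (-(a * σ - b / σ) ^ 2 / (4 * s))) := by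
        refine setIntegral_congr_fun measurableSet_Ioi fun σ (hσ : 0 < σ) => ?_
        rw [abs_of_pos (by positivity), smul_eq_mul, smul_eq_mul, smul_eq_mul,
          deriv_mul_K_mul_K_along_sq_div_one_add_sq hs hσ]
    _ = exp (-(a + b) ^ 2 / (4 * s)) / (2 * π * s ^ 2) * ((b + a) / 2 * √(π * (4 * s))) := by
        rw [MeasureTheory.integral_smul, integral_Ioi_smul_comp_mul_sub_div_of_even ha hb
          (integrable_exp_neg_sq_div (by positivity)) hgauss_even, integral_exp_neg_sq_div,
          smul_eq_mul, smul_eq_mul]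
    _ = K (a + b) s := by
        have hπ : √π ^ 2 = π := sq_sqrt pi_pos.le
        have hs' : √s ^ 2 = s := sq_sqrt hs.le
        have hsqrt : √(π * (4 * s)) = 2 * √π * √s := by
          rw [show π * (4 * s) = (2 * √π * √s) ^ 2 by rw [mul_pow, mul_pow, hπ, hs']; ring,
            sqrt_sq (by positivity)]
        have h32 : s ^ ((3:ℝ)/2) = s * √s := by
          rw [show (3:ℝ)/2 = 1 + 1/2 by norm_num, rpow_add hs, rpow_one, sqrt_eq_rpow]
        rw [K_of_pos _ hs, hsqrt, h32]
        have : 0 < √π := sqrt_pos.2 pi_pos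
        have : 0 < √s := sqrt_pos.2 hs
        field_simp
        rw [hπ, hs']
        ring

end HeatKernel

theorem K_semigroup (x' x z t t' : ℝ) (h1 : x < x') (h2 : z < x) (h3 : t' < t) :
    ∫ τ in t'..t, K (x' - x) (t - τ) * K (x - z) (τ - t') = K (x' - z) (t - t') := by
  have hshift := intervalIntegral.integral_comp_sub_right (a := t') (b := t)
    (fun u => K (x' - x) (t - t' - u) * K (x - z) u) t'
  simp only [sub_sub_sub_cancel_right, sub_self] at hshift
  rw [hshift, intervalIntegral.integral_of_le (sub_pos.2 h3).le, integral_Ioc_eq_integral_Ioo,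
    integral_Ioo_K_mul_K (sub_pos.2 h1) (sub_pos.2 h2) (sub_pos.2 h3), sub_add_sub_cancel]
end
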